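/- For every ν > -1/2, the Bessel function defined by the Poisson representation formula satisfies the recursion relation: for all t > 0, d/dt ( t^{-ν} J_ν(t) ) = − t^{-ν} J_{ν+1}(t). -/

import Mathlib

open MeasureTheory intervalIntegral Set Filter
open scoped Interval Topology

/-!
For `r > 0` the factor `r^{-ν}` cancels the `r^ν` of the Poisson formula, so `t^{-ν} J_ν(t)` is
a constant multiple of `F_{ν-1/2}(t)`, where `F_μ(t) = ∫_{-1}^1 e^{ist} (1-s²)^μ ds`.
Differentiating under the integral sign brings down a factor `is`, and integrating by parts
against `d/ds (1-s²)^{μ+1} = -2(μ+1) s (1-s²)^μ` (the boundary terms vanish as `μ + 1 > 0`)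
gives `F_μ'(t) = -t/(2(μ+1)) F_{μ+1}(t)`. The constants in front match by `Γ(x+1) = x Γ(x)`.
-/

/-- The Bessel function of order `ν`, defined for `r > 0` by the Poisson
representation formula
`J_ν(r) = (r/2)^ν / (Γ(ν+1/2)·Γ(1/2)) · ∫_{-1}^{1} e^{isr} (1−s²)^{ν−1/2} ds`. -/
noncomputable def besselJ (ν : ℝ) (r : ℝ) : ℂ :=
  (((r / 2) ^ ν / (Real.Gamma (ν + 1 / 2) * Real.Gamma (1 / 2)) : ℝ) : ℂ) *
    ∫ s in (-1 : ℝ)..(1 : ℝ),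
      Complex.exp (Complex.I * (s : ℂ) * (r : ℂ)) * (((1 - s ^ 2) ^ (ν - 1 / 2) : ℝ) : ℂ)

noncomputable def poissonIntegral (μ r : ℝ) : ℂ :=
  ∫ s in (-1 : ℝ)..1, Complex.exp (Complex.I * s * r) * (((1 - s ^ 2) ^ μ : ℝ) : ℂ)

lemma intervalIntegrable_one_sub_sq_rpow {μ : ℝ} (hμ : -1 < μ) :
    IntervalIntegrable (fun s : ℝ => (1 - s ^ 2) ^ μ) volume (-1) 1 := by
  have hright : IntervalIntegrable (fun s : ℝ => (1 - s ^ 2) ^ μ) volume 0 1 := by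
    have hsub : IntervalIntegrable (fun s : ℝ => (1 - s) ^ μ) volume 0 1 := by
      simpa using (intervalIntegrable_rpow' (a := 1) (b := 0) hμ).comp_sub_left 1
    have hadd : ContinuousOn (fun s : ℝ => (1 + s) ^ μ) (uIcc 0 1) := fun s hs =>
      (ContinuousAt.rpow_const (by fun_prop) (Or.inl (ne_of_gt
        (by rw [uIcc_of_le zero_le_one] at hs; linarith [hs.1])))).continuousWithinAt
    refine (hsub.mul_continuousOn hadd).congr fun s hs => ?_
    rw [uIoc_of_le zero_le_one] at hs
    rw [← Real.mul_rpow (by linarith [hs.2]) (by linarith [hs.1])]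
    ring_nf
  have hleft := (IntervalIntegrable.iff_comp_neg (a := -1) (b := 0)
    (f := fun s : ℝ => (1 - s ^ 2) ^ μ)).mpr (by simpa using hright.symm)
  exact hleft.trans hright

lemma intervalIntegrable_ofReal_one_sub_sq_rpow {μ : ℝ} (hμ : -1 < μ) :
    IntervalIntegrable (fun s : ℝ => (((1 - s ^ 2) ^ μ : ℝ) : ℂ)) volume (-1) 1 :=
  have h := intervalIntegrable_one_sub_sq_rpow hμ
  ⟨h.1.ofReal, h.2.ofReal⟩

lemma hasDerivAt_cexp_mul_ofReal (c : ℂ) (x : ℝ) :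
    HasDerivAt (fun r : ℝ => Complex.exp (c * r)) (c * Complex.exp (c * x)) x := by
  simpa [mul_comm] using (((hasDerivAt_id x).ofReal_comp).const_mul c).cexp

lemma hasDerivAt_integral_exp_mul {a b : ℝ} {w : ℝ → ℂ}
    (hw : IntervalIntegrable w volume a b) (t : ℝ) :
    HasDerivAt (fun r : ℝ => ∫ s in a..b, Complex.exp (Complex.I * s * r) * w s)
      (∫ s in a..b, Complex.I * s * Complex.exp (Complex.I * s * t) * w s) t := by
  have hcont : ∀ x : ℝ, Continuous fun s : ℝ => Complex.exp (Complex.I * s * x) :=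
    fun x => by fun_prop
  have hw_meas : AEStronglyMeasurable w (volume.restrict (Ι a b)) :=
    hw.def'.aestronglyMeasurable
  refine (hasDerivAt_integral_of_dominated_loc_of_deriv_le
    (bound := fun s => (|a| + |b|) * ‖w s‖) univ_mem
    (.of_forall fun x => (hcont x).aestronglyMeasurable.mul hw_meas)
    (hw.continuousOn_mul (hcont t).continuousOn)
    (((by fun_prop : Continuous fun s : ℝ => Complex.I * s).aestronglyMeasurable.mul
      (hcont t).aestronglyMeasurable).mul hw_meas)
    (.of_forall fun s hs x _ => ?_) (hw.norm.const_mul _)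
    (.of_forall fun s _ x _ => (hasDerivAt_cexp_mul_ofReal (Complex.I * s) x).mul_const (w s))).2
  have hs_le : |s| ≤ |a| + |b| := by
    rcases mem_uIoc.1 hs with h | h <;> rw [abs_le] <;> constructor <;>
      linarith [neg_abs_le a, neg_abs_le b, le_abs_self a, le_abs_self b]
  have hexp : ‖Complex.exp (Complex.I * s * x)‖ = 1 := by simp [Complex.norm_exp]
  rw [norm_mul, norm_mul, norm_mul, hexp, Complex.norm_I, Complex.norm_real, one_mul, mul_one,
    Real.norm_eq_abs]
  exact mul_le_mul_of_nonneg_right hs_le (norm_nonneg _)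

lemma hasDerivAt_one_sub_sq_rpow {p x : ℝ} (hx : x ∈ Ioo (-1 : ℝ) 1) :
    HasDerivAt (fun s : ℝ => (1 - s ^ 2) ^ p) (p * (1 - x ^ 2) ^ (p - 1) * (-2 * x)) x := by
  have hpos : 1 - x ^ 2 ≠ 0 := by nlinarith [hx.1, hx.2]
  have hsq : HasDerivAt (fun s : ℝ => 1 - s ^ 2) (-2 * x) x := by
    simpa using (hasDerivAt_pow 2 x).const_sub 1
  exact (Real.hasDerivAt_rpow_const (Or.inl hpos)).comp x hsq

lemma integral_exp_mul_deriv_one_sub_sq_rpow {μ : ℝ} (hμ : -1 < μ) (t : ℝ) :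
    ∫ s in (-1 : ℝ)..1, Complex.exp (Complex.I * s * t) *
        ((((μ + 1) * (-2 * s) : ℝ) : ℂ) * (((1 - s ^ 2) ^ μ : ℝ) : ℂ))
      = -(Complex.I * t * poissonIntegral (μ + 1) t) := by
  have hμ1 : 0 < μ + 1 := by linarith
  have hu : ∀ x : ℝ, HasDerivAt (fun s : ℝ => Complex.exp (Complex.I * s * t))
      (Complex.I * t * Complex.exp (Complex.I * x * t)) x := fun x => by
    simpa only [mul_right_comm] using hasDerivAt_cexp_mul_ofReal (Complex.I * t) x
  have hv : ∀ x ∈ Ioo (min (-1 : ℝ) 1) (max (-1) 1), HasDerivAt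
      (fun s : ℝ => (((1 - s ^ 2) ^ (μ + 1) : ℝ) : ℂ))
      ((((μ + 1) * (-2 * x) : ℝ) : ℂ) * (((1 - x ^ 2) ^ μ : ℝ) : ℂ)) x := by
    intro x hx
    rw [min_eq_left (by norm_num), max_eq_right (by norm_num)] at hx
    convert (hasDerivAt_one_sub_sq_rpow (p := μ + 1) hx).ofReal_comp using 1
    push_cast
    ring_nf
  have hv_cont : Continuous fun s : ℝ => (((1 - s ^ 2) ^ (μ + 1) : ℝ) : ℂ) :=
    Complex.continuous_ofReal.comp ((by fun_prop : Continuous fun s : ℝ => 1 - s ^ 2).rpow_const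
      fun _ => Or.inr hμ1.le)
  have hv_one : (((1 - (1 : ℝ) ^ 2) ^ (μ + 1) : ℝ) : ℂ) = 0 := by
    simp [Real.zero_rpow hμ1.ne']
  have hv_neg_one : (((1 - (-1 : ℝ) ^ 2) ^ (μ + 1) : ℝ) : ℂ) = 0 := by
    simp [Real.zero_rpow hμ1.ne']
  rw [integral_mul_deriv_eq_deriv_mul_of_hasDerivAt (by fun_prop) hv_cont.continuousOn
      (fun x _ => hu x) hv (Continuous.intervalIntegrable (by fun_prop) _ _)
      ((intervalIntegrable_ofReal_one_sub_sq_rpow hμ).continuousOn_mul (by fun_prop)),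
    hv_one, hv_neg_one, mul_zero, mul_zero, sub_zero, zero_sub, poissonIntegral,
    ← intervalIntegral.integral_const_mul]
  simp only [mul_assoc]

lemma integral_I_mul_exp_mul_one_sub_sq_rpow {μ : ℝ} (hμ : -1 < μ) (t : ℝ) :
    ∫ s in (-1 : ℝ)..1,
        Complex.I * s * Complex.exp (Complex.I * s * t) * (((1 - s ^ 2) ^ μ : ℝ) : ℂ)
      = -(t / (2 * (μ + 1))) * poissonIntegral (μ + 1) t := by
  set L := ∫ s in (-1 : ℝ)..1,
    Complex.I * s * Complex.exp (Complex.I * s * t) * (((1 - s ^ 2) ^ μ : ℝ) : ℂ)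
  have hibp := integral_exp_mul_deriv_one_sub_sq_rpow hμ t
  have hscale : ∫ s in (-1 : ℝ)..1, Complex.exp (Complex.I * s * t) *
      ((((μ + 1) * (-2 * s) : ℝ) : ℂ) * (((1 - s ^ 2) ^ μ : ℝ) : ℂ))
      = 2 * (μ + 1) * Complex.I * L := by
    rw [← intervalIntegral.integral_const_mul]
    refine integral_congr fun s _ => ?_
    push_cast
    linear_combination (-2 * (μ + 1) * s * Complex.exp (Complex.I * s * t) *
      (((1 - s ^ 2) ^ μ : ℝ) : ℂ)) * Complex.I_mul_I
  rw [hscale] at hibp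
  have hμ1 : (2 * (μ + 1) : ℂ) ≠ 0 := by
    exact_mod_cast (by linarith : (2 * (μ + 1) : ℝ) ≠ 0)
  rw [neg_mul, div_mul_eq_mul_div, ← neg_div, eq_div_iff hμ1]
  apply mul_left_cancel₀ Complex.I_ne_zero
  linear_combination hibp

lemma hasDerivAt_poissonIntegral {μ : ℝ} (hμ : -1 < μ) (t : ℝ) :
    HasDerivAt (poissonIntegral μ) (-(t / (2 * (μ + 1))) * poissonIntegral (μ + 1) t) t := by
  rw [← integral_I_mul_exp_mul_one_sub_sq_rpow hμ t]
  exact hasDerivAt_integral_exp_mul (intervalIntegrable_ofReal_one_sub_sq_rpow hμ) t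

noncomputable def besselPoissonConst (ν : ℝ) : ℝ :=
  2 ^ (-ν) / (Real.Gamma (ν + 1 / 2) * Real.Gamma (1 / 2))

lemma rpow_neg_mul_besselJ (ν : ℝ) {r : ℝ} (hr : 0 < r) :
    ((r ^ (-ν) : ℝ) : ℂ) * besselJ ν r
      = (besselPoissonConst ν : ℂ) * poissonIntegral (ν - 1 / 2) r := by
  rw [besselJ, poissonIntegral, ← mul_assoc, ← Complex.ofReal_mul, besselPoissonConst,
    Real.div_rpow hr.le zero_le_two, Real.rpow_neg hr.le, Real.rpow_neg zero_le_two]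
  congr 2
  have hrν : r ^ ν ≠ 0 := (Real.rpow_pos_of_pos hr ν).ne'
  field_simp

lemma besselPoissonConst_add_one {ν : ℝ} (hν : ν + 1 / 2 ≠ 0) :
    besselPoissonConst (ν + 1) = besselPoissonConst ν / (2 * ν + 1) := by
  have hΓ : Real.Gamma (ν + 1 + 1 / 2) = (ν + 1 / 2) * Real.Gamma (ν + 1 / 2) := by
    rw [add_right_comm, Real.Gamma_add_one hν]
  rw [besselPoissonConst, besselPoissonConst, hΓ, neg_add, Real.rpow_add zero_lt_two,
    Real.rpow_neg_one]
  field_simp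

/-- For every `ν > -1/2` and `t > 0`, the recursion relation
`d/dt ( t^{-ν} J_ν(t) ) = − t^{-ν} J_{ν+1}(t)` holds. -/
theorem besselJ_recursion (ν : ℝ) (hν : ν > -1/2) (t : ℝ) (ht : t > 0) :
    deriv (fun s : ℝ => ((s ^ (-ν) : ℝ) : ℂ) * besselJ ν s) t
      = -(((t ^ (-ν) : ℝ) : ℂ) * besselJ (ν + 1) t) := by
  have hlocal : (fun s : ℝ => ((s ^ (-ν) : ℝ) : ℂ) * besselJ ν s)
      =ᶠ[𝓝 t] fun s => (besselPoissonConst ν : ℂ) * poissonIntegral (ν - 1 / 2) s :=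
    (eventually_gt_nhds ht).mono fun s hs => rpow_neg_mul_besselJ ν hs
  have hderiv := (hasDerivAt_poissonIntegral (μ := ν - 1 / 2) (by linarith) t).const_mul
    (besselPoissonConst ν : ℂ)
  have hshift : ((t ^ (-ν) : ℝ) : ℂ) = t * ((t ^ (-(ν + 1)) : ℝ) : ℂ) := by
    rw [← Complex.ofReal_mul, mul_comm, ← Real.rpow_add_one ht.ne',
      show -(ν + 1) + 1 = -ν by ring]
  have hdenom : (2 * (((ν - 1 / 2 : ℝ) : ℂ) + 1)) = 2 * ν + 1 := by push_cast; ring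
  rw [hlocal.deriv_eq, hderiv.deriv, hshift, mul_assoc, rpow_neg_mul_besselJ (ν + 1) ht,
    besselPoissonConst_add_one (by linarith), show ν - 1 / 2 + 1 = ν + 1 - 1 / 2 by ring, hdenom]
  push_cast
  ring
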